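/- arXiv:1711.06638 — 6 statements merged into one kernel-verified Lean document; each statement's English description precedes it below -/
import Mathlib

section
/- Let (X, d) be a metric space with at least three points and let δ : X → ℝ be a function with δ(x) ≤ underline(d)(x) for all x ∈ X. Then the drifted map d_δ is a pseudometric on X: it is nonnegative, symmetric, vanishes on the diagonal, and satisfies the triangle inequality. -/
open scoped Classical

/-- The Gromov product `d(x; y, z) = (d(x,y) + d(x,z) - d(y,z))/2`. -/
noncomputable def gromov {X : Type*} (d : X → X → ℝ) (x y z : X) : ℝ :=
  (d x y + d x z - d y z) / 2

/-- `underline d x` is the infimum of the Gromov products `d(x; y, z)` over all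
pairs of distinct points `y, z` different from `x`. -/
noncomputable def underline {X : Type*} (d : X → X → ℝ) (x : X) : ℝ :=
  sInf {r : ℝ | ∃ y z : X, y ≠ x ∧ z ≠ x ∧ y ≠ z ∧ r = gromov d x y z}

/-- The drifted map `d_δ`: `d_δ(x,x) = 0` and `d_δ(x,y) = d(x,y) - δ(x) - δ(y)` for `x ≠ y`. -/
noncomputable def drift {X : Type*} (d : X → X → ℝ) (δ : X → ℝ) (x y : X) : ℝ :=
  if x = y then 0 else d x y - δ x - δ y

/-! For pairwise distinct `x, y, z`, the triangle inequality `d_δ(x,z) ≤ d_δ(x,y) + d_δ(y,z)`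
rearranges to `δ y ≤ d(y; x, z)`, which is the hypothesis on `δ`. Nonnegativity uses a
third point `z ∉ {x, y}`: adding `δ x ≤ d(x; y, z)` and `δ y ≤ d(y; x, z)` gives
`δ x + δ y ≤ d(x, y)`. -/

section Drift

variable {X : Type*} [PseudoMetricSpace X]

lemma gromov_dist_nonneg (x y z : X) : 0 ≤ gromov dist x y z := by
  have := dist_triangle_left y z x
  unfold gromov
  linarith

lemma underline_le_gromov {x y z : X} (hy : y ≠ x) (hz : z ≠ x) (hyz : y ≠ z) :
    underline dist x ≤ gromov dist x y z :=
  csInf_le ⟨0, by rintro r ⟨y', z', -, -, -, rfl⟩; exact gromov_dist_nonneg x y' z'⟩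
    ⟨y, z, hy, hz, hyz, rfl⟩

lemma exists_ne_ne_of_three {α : Type*} (h3 : ∃ a b c : α, a ≠ b ∧ a ≠ c ∧ b ≠ c) (x y : α) :
    ∃ z, z ≠ x ∧ z ≠ y := by
  obtain ⟨a, b, c, hab, hac, hbc⟩ := h3
  by_contra! h
  rcases eq_or_ne a x with rfl | ha
  · exact hbc ((h b hab.symm).trans (h c hac.symm).symm)
  rcases eq_or_ne b x with rfl | hb
  · exact hac ((h a ha).trans (h c hbc.symm).symm)
  exact hab ((h a ha).trans (h b hb).symm)

variable {δ : X → ℝ}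

lemma add_le_dist_of_le_underline (h3 : ∃ a b c : X, a ≠ b ∧ a ≠ c ∧ b ≠ c)
    (hδ : ∀ x, δ x ≤ underline dist x) {x y : X} (hxy : x ≠ y) : δ x + δ y ≤ dist x y := by
  obtain ⟨z, hzx, hzy⟩ := exists_ne_ne_of_three h3 x y
  have hx := (hδ x).trans (underline_le_gromov hxy.symm hzx hzy.symm)
  have hy := (hδ y).trans (underline_le_gromov hxy hzy hzx.symm)
  unfold gromov at hx hy
  linarith [dist_comm x y]

lemma drift_self (x : X) : drift dist δ x x = 0 := if_pos rfl

lemma drift_comm (x y : X) : drift dist δ x y = drift dist δ y x := by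
  rcases eq_or_ne x y with rfl | hxy
  · rfl
  simp only [drift, if_neg hxy, if_neg hxy.symm, dist_comm x y]
  ring

lemma drift_nonneg (h3 : ∃ a b c : X, a ≠ b ∧ a ≠ c ∧ b ≠ c)
    (hδ : ∀ x, δ x ≤ underline dist x) (x y : X) : 0 ≤ drift dist δ x y := by
  rcases eq_or_ne x y with rfl | hxy
  · exact (drift_self x).ge
  rw [drift, if_neg hxy]
  linarith [add_le_dist_of_le_underline h3 hδ hxy]

lemma drift_triangle (h3 : ∃ a b c : X, a ≠ b ∧ a ≠ c ∧ b ≠ c)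
    (hδ : ∀ x, δ x ≤ underline dist x) (x y z : X) :
    drift dist δ x z ≤ drift dist δ x y + drift dist δ y z := by
  rcases eq_or_ne x z with rfl | hxz
  · rw [drift_self]
    exact add_nonneg (drift_nonneg h3 hδ x y) (drift_nonneg h3 hδ y x)
  rcases eq_or_ne x y with rfl | hxy
  · simp [drift_self]
  rcases eq_or_ne y z with rfl | hyz
  · simp [drift_self]
  have hy := (hδ y).trans (underline_le_gromov hxy hyz.symm hxz)
  unfold gromov at hy
  simp only [drift, if_neg hxy, if_neg hyz, if_neg hxz]
  linarith [dist_comm x y]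

end Drift

theorem stmt1 {X : Type*} [MetricSpace X]
    (h3 : ∃ a b c : X, a ≠ b ∧ a ≠ c ∧ b ≠ c)
    (δ : X → ℝ) (hδ : ∀ x : X, δ x ≤ underline (fun a b => dist a b) x) :
    (∀ x y : X, 0 ≤ drift (fun a b => dist a b) δ x y) ∧
    (∀ x y : X, drift (fun a b => dist a b) δ x y = drift (fun a b => dist a b) δ y x) ∧
    (∀ x : X, drift (fun a b => dist a b) δ x x = 0) ∧
    (∀ x y z : X, drift (fun a b => dist a b) δ x z ≤
      drift (fun a b => dist a b) δ x y + drift (fun a b => dist a b) δ y z) :=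
  ⟨drift_nonneg h3 hδ, drift_comm, drift_self, drift_triangle h3 hδ⟩
end

section
/- Let A be a type with at least two elements (with decidable equality) and let n ≥ 2. Consider X = (Fin n → A) with the Hamming distance d (the number of coordinates at which two tuples differ). Then X is trim: for every x ∈ X, the infimum over all pairs of distinct y, z ∈ X \ {x} of the Gromov product (d(x, y) + d(x, z) − d(y, z))/2 equals 0. -/
section GromovProduct

variable {X : Type*} {d : X → X → ℝ}

lemma gromov_nonneg (hcomm : ∀ y z, d y z = d z y) (htri : ∀ x y z, d x z ≤ d x y + d y z)
    (x y z : X) : 0 ≤ gromov d x y z := by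
  have := htri y x z
  rw [hcomm y x] at this
  unfold gromov
  linarith

lemma underline_eq_zero_of_gromov_eq_zero {x y z : X} (hnonneg : ∀ y z, 0 ≤ gromov d x y z)
    (hy : y ≠ x) (hz : z ≠ x) (hyz : y ≠ z) (h : gromov d x y z = 0) :
    underline d x = 0 :=
  IsLeast.csInf_eq
    ⟨⟨y, z, hy, hz, hyz, h.symm⟩, by rintro r ⟨u, v, -, -, -, rfl⟩; exact hnonneg u v⟩

end GromovProduct

section Hamming

open Function

variable {ι : Type*} [Fintype ι] [DecidableEq ι] {β : ι → Type*} [∀ i, DecidableEq (β i)]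

lemma hammingDist_update_self (x : ∀ i, β i) {i : ι} {a : β i} (ha : a ≠ x i) :
    hammingDist x (update x i a) = 1 := by
  refine Finset.card_eq_one.2 ⟨i, ?_⟩
  ext k
  by_cases hki : k = i
  · subst hki; simp [Ne.symm ha]
  · simp [hki]

lemma hammingDist_update_update (x : ∀ i, β i) {i j : ι} (hij : i ≠ j) {a : β i} {b : β j}
    (ha : a ≠ x i) (hb : b ≠ x j) :
    hammingDist (update x i a) (update x j b) = 2 := by
  rw [hammingDist, ← Finset.card_pair hij]
  congr 1
  ext k
  by_cases hki : k = i
  · subst hki; simp [hij, ha]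
  · by_cases hkj : k = j
    · subst hkj; simp [hki, Ne.symm hb]
    · simp [hki, hkj]

lemma gromov_hammingDist_update_update (x : ∀ i, β i) {i j : ι} (hij : i ≠ j) {a : β i}
    {b : β j} (ha : a ≠ x i) (hb : b ≠ x j) :
    gromov (fun y z => (hammingDist y z : ℝ)) x (update x i a) (update x j b) = 0 := by
  simp only [gromov, hammingDist_update_self x ha, hammingDist_update_self x hb,
    hammingDist_update_update x hij ha hb]
  norm_num

end Hamming

/-- The space of tuples `Fin n → A` (`n ≥ 2`, `A` with at least two elements) with the
Hamming distance is trim. -/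
theorem stmt4 {A : Type*} [DecidableEq A] (hA : ∃ a b : A, a ≠ b)
    {n : ℕ} (hn : 2 ≤ n) (x : Fin n → A) :
    underline (fun y z : Fin n → A => (hammingDist y z : ℝ)) x = 0 := by
  obtain ⟨a, b, hab⟩ := hA
  have : Nontrivial A := nontrivial_of_ne a b hab
  let i : Fin n := ⟨0, by omega⟩
  let j : Fin n := ⟨1, by omega⟩
  have hij : i ≠ j := by simp [i, j, Fin.ext_iff]
  obtain ⟨a', ha'⟩ := exists_ne (x i)
  obtain ⟨b', hb'⟩ := exists_ne (x j)
  have hnonneg : ∀ y z, 0 ≤ gromov (fun y z : Fin n → A => (hammingDist y z : ℝ)) x y z :=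
    gromov_nonneg (fun y z => by rw [hammingDist_comm])
      (fun y z w => mod_cast hammingDist_triangle y z w) x
  refine underline_eq_zero_of_gromov_eq_zero hnonneg ?_ ?_ ?_
    (gromov_hammingDist_update_update x hij ha' hb')
  · rw [Ne, Function.update_eq_self_iff]; exact ha'
  · rw [Ne, Function.update_eq_self_iff]; exact hb'
  · rw [← hammingDist_ne_zero, hammingDist_update_update x hij ha' hb']; norm_num
end

section
/- Let ((X_k, d_k), p_k, u_k) be a trimming sequence and let x, y ∈ X_0 be distinct points such that x_{(k)} = y_{(k)} for some k. Let m be the smallest such index (necessarily m ≥ 1). Then d_0(x, y) = σ^m(x) + σ^m(y). -/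
/-!
Before the trajectories of `x` and `y` merge, each trimming step lowers their distance by
exactly `u_k(x_(k)) + u_k(y_(k))`: by (a) when the images differ, and by (b) when they coincide,
the new distance being `0`. Summing up to the merging index `m` gives `0 = d(x, y) - σ^m x - σ^m y`.
-/

/-- The trimming sequence of a point: `traj p x 0 = x` and `traj p x (k+1) = p k (traj p x k)`. -/
def traj {X : ℕ → Type*} (p : ∀ k, X k → X (k + 1)) (x : X 0) : ∀ k, X k
  | 0 => x
  | k + 1 => p k (traj p x k)

section Trimming

variable {X : ℕ → Type*} [∀ k, PseudoMetricSpace (X k)]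
  {p : ∀ k, X k → X (k + 1)} {u : ∀ k, X k → ℝ}

theorem dist_map_eq_sub_of_ne
    (ha : ∀ k (x y : X k), p k x ≠ p k y → dist (p k x) (p k y) = dist x y - u k x - u k y)
    (hb : ∀ k (x y : X k), x ≠ y → p k x = p k y → dist x y = u k x + u k y)
    {k : ℕ} {a b : X k} (hab : a ≠ b) :
    dist (p k a) (p k b) = dist a b - u k a - u k b := by
  by_cases hp : p k a = p k b
  · rw [hp, dist_self, hb k a b hab hp]
    ring
  · exact ha k a b hp

theorem dist_traj_eq_sub_sum
    (ha : ∀ k (x y : X k), p k x ≠ p k y → dist (p k x) (p k y) = dist x y - u k x - u k y)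
    (hb : ∀ k (x y : X k), x ≠ y → p k x = p k y → dist x y = u k x + u k y)
    {x y : X 0} {j : ℕ} (hne : ∀ i < j, traj p x i ≠ traj p y i) :
    dist (traj p x j) (traj p y j) =
      dist x y - (∑ k ∈ Finset.range j, u k (traj p x k)) -
        (∑ k ∈ Finset.range j, u k (traj p y k)) := by
  induction j with
  | zero => simp [traj]
  | succ n ih =>
    have hstep := dist_map_eq_sub_of_ne ha hb (hne n n.lt_succ_self)
    rw [traj, traj, hstep, ih fun i hi => hne i (hi.trans n.lt_succ_self),
      Finset.sum_range_succ, Finset.sum_range_succ]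
    ring

end Trimming

theorem stmt5_general {X : ℕ → Type*} [∀ k, MetricSpace (X k)]
    (p : ∀ k, X k → X (k + 1)) (u : ∀ k, X k → ℝ)
    (ha : ∀ k (x y : X k), p k x ≠ p k y →
      dist (p k x) (p k y) = dist x y - u k x - u k y)
    (hb : ∀ k (x y : X k), x ≠ y → p k x = p k y → dist x y = u k x + u k y)
    (x y : X 0) (m : ℕ)
    (hm : traj p x m = traj p y m)
    (hmin : ∀ j, traj p x j = traj p y j → m ≤ j) :
    dist x y = (∑ k ∈ Finset.range m, u k (traj p x k)) +
      (∑ k ∈ Finset.range m, u k (traj p y k)) := by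
  have hne : ∀ i < m, traj p x i ≠ traj p y i := fun i hi h => (hmin i h).not_gt hi
  have hdist := dist_traj_eq_sub_sum ha hb hne
  rw [hm, dist_self] at hdist
  linarith

theorem stmt5 {X : ℕ → Type*} [∀ k, MetricSpace (X k)]
    (p : ∀ k, X k → X (k + 1)) (u : ∀ k, X k → ℝ)
    (hsurj : ∀ k, Function.Surjective (p k))
    (hu : ∀ k (x : X k), 0 ≤ u k x)
    (ha : ∀ k (x y : X k), p k x ≠ p k y →
      dist (p k x) (p k y) = dist x y - u k x - u k y)
    (hb : ∀ k (x y : X k), x ≠ y → p k x = p k y → dist x y = u k x + u k y)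
    (x y : X 0) (hxy : x ≠ y) (m : ℕ)
    (hm : traj p x m = traj p y m)
    (hmin : ∀ j, traj p x j = traj p y j → m ≤ j) :
    dist x y = (∑ k ∈ Finset.range m, u k (traj p x k)) +
      (∑ k ∈ Finset.range m, u k (traj p y k)) :=
  stmt5_general p u ha hb x y m hm hmin
end

section
/- Let ((X_k, d_k), p_k, u_k) be a trimming sequence and let x, y ∈ X_0 be points with x_{(k)} ≠ y_{(k)} for all k. Then both series Σ_{k=0}^{∞} u_k(x_{(k)}) and Σ_{k=0}^{∞} u_k(y_{(k)}) converge, the nonincreasing sequence (d_k(x_{(k)}, y_{(k)}))_k converges, and d_0(x, y) = lim_{k→∞} d_k(x_{(k)}, y_{(k)}) + σ(x) + σ(y). -/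
open Filter Topology

theorem exists_tendsto_and_hasSum_of_succ_eq_sub {D c : ℕ → ℝ} (hc : ∀ k, 0 ≤ c k)
    (hD : ∀ k, 0 ≤ D k) (h : ∀ k, D (k + 1) = D k - c k) :
    ∃ L, Tendsto D atTop (𝓝 L) ∧ HasSum c (D 0 - L) := by
  have hpartial : ∀ n, ∑ k ∈ Finset.range n, c k = D 0 - D n := fun n => by
    rw [← Finset.sum_range_sub' D n]
    exact Finset.sum_congr rfl fun k _ => by rw [h]; ring
  have hsum : Summable c :=
    summable_of_sum_range_le hc fun n => by rw [hpartial]; linarith [hD n]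
  refine ⟨D 0 - ∑' k, c k, ?_, by rw [sub_sub_cancel]; exact hsum.hasSum⟩
  simpa [hpartial] using hsum.hasSum.tendsto_sum_nat.const_sub (D 0)

theorem stmt6_general {X : ℕ → Type*} [∀ k, MetricSpace (X k)]
    (p : ∀ k, X k → X (k + 1)) (u : ∀ k, X k → ℝ)
    (hu : ∀ k (x : X k), 0 ≤ u k x)
    (ha : ∀ k (x y : X k), p k x ≠ p k y →
      dist (p k x) (p k y) = dist x y - u k x - u k y)
    (x y : X 0) (hxy : ∀ k, traj p x k ≠ traj p y k) :
    Summable (fun k => u k (traj p x k)) ∧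
    Summable (fun k => u k (traj p y k)) ∧
    (∀ k, dist (traj p x (k + 1)) (traj p y (k + 1)) ≤ dist (traj p x k) (traj p y k)) ∧
    ∃ L : ℝ, Filter.Tendsto (fun k => dist (traj p x k) (traj p y k))
        Filter.atTop (nhds L) ∧
      dist x y = L + (∑' k, u k (traj p x k)) + (∑' k, u k (traj p y k)) := by
  have hstep : ∀ k, dist (traj p x (k + 1)) (traj p y (k + 1)) =
      dist (traj p x k) (traj p y k) - (u k (traj p x k) + u k (traj p y k)) := fun k => by
    rw [← sub_sub]; exact ha k _ _ (hxy (k + 1))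
  obtain ⟨L, hL, hsum⟩ := exists_tendsto_and_hasSum_of_succ_eq_sub
    (fun _ => add_nonneg (hu _ _) (hu _ _)) (fun _ => dist_nonneg) hstep
  have hsx : Summable (fun k => u k (traj p x k)) :=
    hsum.summable.of_nonneg_of_le (fun _ => hu _ _) fun _ => le_add_of_nonneg_right (hu _ _)
  have hsy : Summable (fun k => u k (traj p y k)) :=
    hsum.summable.of_nonneg_of_le (fun _ => hu _ _) fun _ => le_add_of_nonneg_left (hu _ _)
  refine ⟨hsx, hsy, fun k => ?_, L, hL, ?_⟩
  · rw [hstep k]; linarith [hu k (traj p x k), hu k (traj p y k)]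
  · have hD0 : dist x y - L = _ := hsum.unique (hsx.hasSum.add hsy.hasSum)
    linarith

theorem stmt6 {X : ℕ → Type*} [∀ k, MetricSpace (X k)]
    (p : ∀ k, X k → X (k + 1)) (u : ∀ k, X k → ℝ)
    (hsurj : ∀ k, Function.Surjective (p k))
    (hu : ∀ k (x : X k), 0 ≤ u k x)
    (ha : ∀ k (x y : X k), p k x ≠ p k y →
      dist (p k x) (p k y) = dist x y - u k x - u k y)
    (hb : ∀ k (x y : X k), x ≠ y → p k x = p k y → dist x y = u k x + u k y)
    (x y : X 0) (hxy : ∀ k, traj p x k ≠ traj p y k) :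
    Summable (fun k => u k (traj p x k)) ∧
    Summable (fun k => u k (traj p y k)) ∧
    (∀ k, dist (traj p x (k + 1)) (traj p y (k + 1)) ≤ dist (traj p x k) (traj p y k)) ∧
    ∃ L : ℝ, Filter.Tendsto (fun k => dist (traj p x k) (traj p y k))
        Filter.atTop (nhds L) ∧
      dist x y = L + (∑' k, u k (traj p x k)) + (∑' k, u k (traj p y k)) :=
  stmt6_general p u hu ha x y hxy
end

section
/- Let I be a set equipped with a pseudometric e, and for each i ∈ I let (L_i, ρ_i) be a pseudometric space together with a function σ_i : L_i → ℝ with σ_i ≥ 0 such that |σ_i(a) − σ_i(b)| ≤ ρ_i(a, b) ≤ σ_i(a) + σ_i(b) for all a, b ∈ L_i. Define ρ on the disjoint union ⨿_{i∈I} L_i by: ρ(a, b) = ρ_i(a, b) if a, b ∈ L_i, and ρ(a, b) = e(i, j) + σ_i(a) + σ_j(b) if a ∈ L_i, b ∈ L_j with i ≠ j. Then ρ is a pseudometric on ⨿_{i∈I} L_i. -/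
/-!
Write `x = ⟨i, a⟩` and `D(x, y) = e i j + σ a + σ b`. Then `R ≤ D` everywhere, with equality
across different components, and `D(x, z) ≤ D(x, y) + D(y, z)` because `σ ≥ 0`. Moreover, the
lower bound `σ a - σ b ≤ ρ a b` makes `R(⟨i, a⟩, z) ≤ ρ a b + R(⟨i, b⟩, z)` for every `z`. So
the triangle inequality reduces to the second fact when two consecutive points share a component,
and to the first otherwise. Nonnegativity follows from the other three axioms.
-/

theorem nonneg_of_self_symm_triangle {X : Type*} {d : X → X → ℝ} (h0 : ∀ x, d x x = 0)
    (hsymm : ∀ x y, d x y = d y x) (htri : ∀ x y z, d x z ≤ d x y + d y z) (x y : X) :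
    0 ≤ d x y := by
  linarith [htri x y x, h0 x, hsymm x y]

section Glued

variable {I : Type*} {L : I → Type*} {e : I → I → ℝ} {ρ : ∀ i, L i → L i → ℝ}
  {σ : ∀ i, L i → ℝ} {R : (Σ i, L i) → (Σ i, L i) → ℝ}

theorem glued_self (hρ0 : ∀ i (a : L i), ρ i a a = 0)
    (hRsame : ∀ i (a b : L i), R ⟨i, a⟩ ⟨i, b⟩ = ρ i a b) (x : Σ i, L i) : R x x = 0 := by
  obtain ⟨i, a⟩ := x
  rw [hRsame, hρ0]

theorem glued_symm (hesymm : ∀ i j, e i j = e j i) (hρsymm : ∀ i (a b : L i), ρ i a b = ρ i b a)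
    (hRsame : ∀ i (a b : L i), R ⟨i, a⟩ ⟨i, b⟩ = ρ i a b)
    (hRdiff : ∀ i j (a : L i) (b : L j), i ≠ j → R ⟨i, a⟩ ⟨j, b⟩ = e i j + σ i a + σ j b)
    (x y : Σ i, L i) : R x y = R y x := by
  obtain ⟨i, a⟩ := x
  obtain ⟨j, b⟩ := y
  rcases eq_or_ne i j with rfl | hij
  · rw [hRsame, hRsame, hρsymm]
  · rw [hRdiff i j a b hij, hRdiff j i b a hij.symm, hesymm]
    ring

theorem glued_le_cone (he0 : ∀ i, e i i = 0) (hρσ : ∀ i (a b : L i), ρ i a b ≤ σ i a + σ i b)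
    (hRsame : ∀ i (a b : L i), R ⟨i, a⟩ ⟨i, b⟩ = ρ i a b)
    (hRdiff : ∀ i j (a : L i) (b : L j), i ≠ j → R ⟨i, a⟩ ⟨j, b⟩ = e i j + σ i a + σ j b)
    {i j : I} (a : L i) (b : L j) : R ⟨i, a⟩ ⟨j, b⟩ ≤ e i j + σ i a + σ j b := by
  rcases eq_or_ne i j with rfl | hij
  · rw [hRsame, he0, zero_add]
    exact hρσ i a b
  · exact (hRdiff i j a b hij).le

theorem glued_le_dist_add_glued (hρtri : ∀ i (a b c : L i), ρ i a c ≤ ρ i a b + ρ i b c)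
    (hσρ : ∀ i (a b : L i), σ i a - σ i b ≤ ρ i a b)
    (hRsame : ∀ i (a b : L i), R ⟨i, a⟩ ⟨i, b⟩ = ρ i a b)
    (hRdiff : ∀ i j (a : L i) (b : L j), i ≠ j → R ⟨i, a⟩ ⟨j, b⟩ = e i j + σ i a + σ j b)
    {i : I} (a b : L i) (z : Σ i, L i) : R ⟨i, a⟩ z ≤ ρ i a b + R ⟨i, b⟩ z := by
  obtain ⟨k, c⟩ := z
  rcases eq_or_ne i k with rfl | hik
  · rw [hRsame, hRsame]
    exact hρtri i a b c
  · rw [hRdiff i k a c hik, hRdiff i k b c hik]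
    linarith [hσρ i a b]

theorem glued_triangle (he0 : ∀ i, e i i = 0) (hesymm : ∀ i j, e i j = e j i)
    (hetri : ∀ i j k, e i k ≤ e i j + e j k)
    (hρsymm : ∀ i (a b : L i), ρ i a b = ρ i b a)
    (hρtri : ∀ i (a b c : L i), ρ i a c ≤ ρ i a b + ρ i b c)
    (hσnn : ∀ i (a : L i), 0 ≤ σ i a) (hσρ : ∀ i (a b : L i), σ i a - σ i b ≤ ρ i a b)
    (hρσ : ∀ i (a b : L i), ρ i a b ≤ σ i a + σ i b)
    (hRsame : ∀ i (a b : L i), R ⟨i, a⟩ ⟨i, b⟩ = ρ i a b)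
    (hRdiff : ∀ i j (a : L i) (b : L j), i ≠ j → R ⟨i, a⟩ ⟨j, b⟩ = e i j + σ i a + σ j b)
    (x y z : Σ i, L i) : R x z ≤ R x y + R y z := by
  have hRsymm := glued_symm hesymm hρsymm hRsame hRdiff
  obtain ⟨i, a⟩ := x
  obtain ⟨j, b⟩ := y
  obtain ⟨k, c⟩ := z
  rcases eq_or_ne i j with rfl | hij
  · rw [hRsame]
    exact glued_le_dist_add_glued hρtri hσρ hRsame hRdiff a b _
  rcases eq_or_ne j k with rfl | hjk
  · rw [hRsymm _ ⟨j, c⟩, hRsymm _ ⟨j, b⟩, hRsame, hρsymm]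
    linarith [glued_le_dist_add_glued hρtri hσρ hRsame hRdiff c b ⟨i, a⟩]
  calc R ⟨i, a⟩ ⟨k, c⟩ ≤ e i k + σ i a + σ k c := glued_le_cone he0 hρσ hRsame hRdiff a c
    _ ≤ (e i j + σ i a + σ j b) + (e j k + σ j b + σ k c) := by
      linarith [hetri i j k, hσnn j b]
    _ = R ⟨i, a⟩ ⟨j, b⟩ + R ⟨j, b⟩ ⟨k, c⟩ := by rw [hRdiff i j a b hij, hRdiff j k b c hjk]

end Glued

theorem stmt9_general {I : Type*} (e : I → I → ℝ)
    (he0 : ∀ i, e i i = 0) (hesymm : ∀ i j, e i j = e j i)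
    (hetri : ∀ i j k, e i k ≤ e i j + e j k)
    {L : I → Type*} (ρ : ∀ i, L i → L i → ℝ)
    (hρ0 : ∀ i (a : L i), ρ i a a = 0)
    (hρsymm : ∀ i (a b : L i), ρ i a b = ρ i b a)
    (hρtri : ∀ i (a b c : L i), ρ i a c ≤ ρ i a b + ρ i b c)
    (σ : ∀ i, L i → ℝ) (hσnn : ∀ i (a : L i), 0 ≤ σ i a)
    (hσ : ∀ i (a b : L i), |σ i a - σ i b| ≤ ρ i a b ∧ ρ i a b ≤ σ i a + σ i b)
    (R : (Σ i, L i) → (Σ i, L i) → ℝ)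
    (hRsame : ∀ i (a b : L i), R ⟨i, a⟩ ⟨i, b⟩ = ρ i a b)
    (hRdiff : ∀ i j (a : L i) (b : L j), i ≠ j →
      R ⟨i, a⟩ ⟨j, b⟩ = e i j + σ i a + σ j b) :
    (∀ a, R a a = 0) ∧ (∀ a b, R a b = R b a) ∧ (∀ a b, 0 ≤ R a b) ∧
    (∀ a b c, R a c ≤ R a b + R b c) := by
  have hσρ : ∀ i (a b : L i), σ i a - σ i b ≤ ρ i a b :=
    fun i a b => (abs_sub_le_iff.1 (hσ i a b).1).1
  have hρσ : ∀ i (a b : L i), ρ i a b ≤ σ i a + σ i b := fun i a b => (hσ i a b).2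
  have hR0 := glued_self hρ0 hRsame
  have hRsymm := glued_symm hesymm hρsymm hRsame hRdiff
  have hRtri := glued_triangle he0 hesymm hetri hρsymm hρtri hσnn hσρ hρσ hRsame hRdiff
  exact ⟨hR0, hRsymm, nonneg_of_self_symm_triangle hR0 hRsymm hRtri, hRtri⟩

theorem stmt9 {I : Type*} (e : I → I → ℝ)
    (he0 : ∀ i, e i i = 0) (hesymm : ∀ i j, e i j = e j i)
    (henn : ∀ i j, 0 ≤ e i j)
    (hetri : ∀ i j k, e i k ≤ e i j + e j k)
    {L : I → Type*} (ρ : ∀ i, L i → L i → ℝ)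
    (hρ0 : ∀ i (a : L i), ρ i a a = 0)
    (hρsymm : ∀ i (a b : L i), ρ i a b = ρ i b a)
    (hρnn : ∀ i (a b : L i), 0 ≤ ρ i a b)
    (hρtri : ∀ i (a b c : L i), ρ i a c ≤ ρ i a b + ρ i b c)
    (σ : ∀ i, L i → ℝ) (hσnn : ∀ i (a : L i), 0 ≤ σ i a)
    (hσ : ∀ i (a b : L i), |σ i a - σ i b| ≤ ρ i a b ∧ ρ i a b ≤ σ i a + σ i b)
    (R : (Σ i, L i) → (Σ i, L i) → ℝ)
    (hRsame : ∀ i (a b : L i), R ⟨i, a⟩ ⟨i, b⟩ = ρ i a b)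
    (hRdiff : ∀ i j (a : L i) (b : L j), i ≠ j →
      R ⟨i, a⟩ ⟨j, b⟩ = e i j + σ i a + σ j b) :
    (∀ a, R a a = 0) ∧ (∀ a b, R a b = R b a) ∧ (∀ a b, 0 ≤ R a b) ∧
    (∀ a b c, R a c ≤ R a b + R b c) :=
  stmt9_general e he0 hesymm hetri ρ hρ0 hρsymm hρtri σ hσnn hσ R hRsame hRdiff
end

section
/- Let ((X_k, d_k), p_k, u_k) be a trimming sequence such that there exist x₀, y₀ ∈ X_0 with (x₀)_{(k)} ≠ (y₀)_{(k)} for all k (so that σ(x) converges for every x ∈ X_0). Define e : X_0 × X_0 → ℝ by e(x, y) = lim_{k→∞} d_k(x_{(k)}, y_{(k)}) (the limit of a nonincreasing nonnegative sequence). Then e is a pseudometric on X_0, and the map Φ(f) = f + σ is a bijection from T(X_0, e) onto the set τ = {g ∈ T(X_0, d_0) : σ^n(x) ≤ g(x) for all n ∈ ℕ and all x ∈ X_0}, preserving the sup-distance: d_T(Φ(f₁), Φ(f₂)) = d_T(f₁, f₂) for all f₁, f₂ ∈ T(X_0, e). -/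
/-- The tight span of a pseudometric `d` on `X`. -/
def TightSpan {X : Type*} (d : X → X → ℝ) : Set (X → ℝ) :=
  {f | (∀ x, 0 ≤ f x) ∧ (∀ x y, d x y ≤ f x + f y) ∧
    ∀ x, ∀ ε : ℝ, 0 < ε → ∃ y, f x + f y ≤ d x y + ε}

/-- The sup-distance on the tight span: `dT f g = sup_x |f x - g x|`. -/
noncomputable def dT {X : Type*} (f g : X → ℝ) : ℝ :=
  ⨆ x, |f x - g x|

open Filter Topology Finset

/-- `σⁿ(x)` in the paper. -/
def trimSum {X : ℕ → Type*} (p : ∀ k, X k → X (k + 1)) (u : ∀ k, X k → ℝ) (x : X 0)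
    (n : ℕ) : ℝ :=
  ∑ k ∈ range n, u k (traj p x k)

/-- `σ(x)` in the paper (junk value `0` if the series diverges). -/
noncomputable def trimTsum {X : ℕ → Type*} (p : ∀ k, X k → X (k + 1)) (u : ∀ k, X k → ℝ)
    (x : X 0) : ℝ :=
  ∑' k, u k (traj p x k)

section Trajectory

variable {X : ℕ → Type*} {p : ∀ k, X k → X (k + 1)}

@[simp] theorem traj_zero (x : X 0) : traj p x 0 = x := rfl

@[simp] theorem traj_succ (x : X 0) (k : ℕ) : traj p x (k + 1) = p k (traj p x k) := rfl

theorem traj_eq_of_le {x y : X 0} {n m : ℕ} (hnm : n ≤ m) (h : traj p x n = traj p y n) :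
    traj p x m = traj p y m := by
  induction m, hnm using Nat.le_induction with
  | base => exact h
  | succ m _ ih => simp only [traj_succ, ih]

theorem exists_forall_traj_ne {x₀ y₀ : X 0} (h₀ : ∀ k, traj p x₀ k ≠ traj p y₀ k) (x : X 0) :
    ∃ w, ∀ k, traj p x k ≠ traj p w k := by
  by_cases hx : ∀ k, traj p x k ≠ traj p x₀ k
  · exact ⟨x₀, hx⟩
  obtain ⟨n, hn⟩ := not_forall_not.mp hx
  refine ⟨y₀, fun m hm => h₀ (max n m) ?_⟩
  exact (traj_eq_of_le (le_max_left n m) hn).symm.trans (traj_eq_of_le (le_max_right n m) hm)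

@[simp] theorem trimSum_zero (u : ∀ k, X k → ℝ) (x : X 0) : trimSum p u x 0 = 0 := rfl

theorem trimSum_succ (u : ∀ k, X k → ℝ) (x : X 0) (n : ℕ) :
    trimSum p u x (n + 1) = trimSum p u x n + u n (traj p x n) :=
  sum_range_succ _ _

theorem tendsto_trimSum {u : ∀ k, X k → ℝ} {x : X 0} (hs : Summable fun k => u k (traj p x k)) :
    Tendsto (trimSum p u x) atTop (𝓝 (trimTsum p u x)) :=
  hs.hasSum.tendsto_sum_nat

end Trajectory

section Trimming

variable {X : ℕ → Type*} [∀ k, PseudoMetricSpace (X k)] {p : ∀ k, X k → X (k + 1)}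
  {u : ∀ k, X k → ℝ}

/-- The axioms of a trimming sequence, surjectivity of the maps `p k` aside. -/
structure IsTrimming (p : ∀ k, X k → X (k + 1)) (u : ∀ k, X k → ℝ) : Prop where
  nonneg : ∀ k x, 0 ≤ u k x
  dist_map_of_ne : ∀ k (x y : X k), p k x ≠ p k y →
    dist (p k x) (p k y) = dist x y - u k x - u k y
  dist_of_map_eq : ∀ k (x y : X k), x ≠ y → p k x = p k y → dist x y = u k x + u k y

namespace IsTrimming

theorem trimSum_nonneg (h : IsTrimming p u) (x : X 0) (n : ℕ) : 0 ≤ trimSum p u x n :=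
  sum_nonneg fun k _ => h.nonneg k _

theorem trimTsum_nonneg (h : IsTrimming p u) (x : X 0) : 0 ≤ trimTsum p u x :=
  tsum_nonneg fun k => h.nonneg k _

theorem trimSum_le_trimTsum (h : IsTrimming p u) {x : X 0}
    (hs : Summable fun k => u k (traj p x k)) (n : ℕ) : trimSum p u x n ≤ trimTsum p u x :=
  hs.sum_le_tsum _ fun k _ => h.nonneg k _

theorem dist_le_dist_map_add (h : IsTrimming p u) {k : ℕ} (a b : X k) :
    dist a b ≤ dist (p k a) (p k b) + u k a + u k b := by
  have hua := h.nonneg k a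
  have hub := h.nonneg k b
  by_cases hab : a = b
  · simp only [hab, dist_self]
    linarith
  by_cases hp : p k a = p k b
  · rw [hp, dist_self, h.dist_of_map_eq k a b hab hp, zero_add]
  · rw [h.dist_map_of_ne k a b hp]
    linarith

theorem dist_le_dist_traj_add (h : IsTrimming p u) (x y : X 0) (n : ℕ) :
    dist x y ≤ dist (traj p x n) (traj p y n) + trimSum p u x n + trimSum p u y n := by
  induction n with
  | zero => simp
  | succ n ih =>
    have := h.dist_le_dist_map_add (traj p x n) (traj p y n)
    rw [trimSum_succ, trimSum_succ, traj_succ, traj_succ]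
    linarith

theorem dist_traj_of_ne (h : IsTrimming p u) {x y : X 0} {n : ℕ}
    (hn : traj p x n ≠ traj p y n) :
    dist (traj p x n) (traj p y n) = dist x y - trimSum p u x n - trimSum p u y n := by
  induction n with
  | zero => simp
  | succ n ih =>
    have hprev : traj p x n ≠ traj p y n := fun hc => hn (traj_eq_of_le n.le_succ hc)
    rw [trimSum_succ, trimSum_succ, traj_succ, traj_succ, h.dist_map_of_ne n _ _ hn, ih hprev]
    ring

/-- The distance of two never-meeting trajectories bounds the partial sums of either. -/
theorem summable_of_forall_traj_ne (h : IsTrimming p u) {x y : X 0}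
    (hxy : ∀ k, traj p x k ≠ traj p y k) : Summable fun k => u k (traj p x k) := by
  refine summable_of_sum_range_le (c := dist x y) (fun k => h.nonneg k _) fun n => ?_
  have hd := h.dist_traj_of_ne (hxy n)
  have := h.trimSum_nonneg y n
  have := dist_nonneg (x := traj p x n) (y := traj p y n)
  change trimSum p u x n ≤ _
  linarith

theorem summable (h : IsTrimming p u) {x₀ y₀ : X 0} (h₀ : ∀ k, traj p x₀ k ≠ traj p y₀ k)
    (x : X 0) : Summable fun k => u k (traj p x k) :=
  have ⟨_, hw⟩ := exists_forall_traj_ne h₀ x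
  h.summable_of_forall_traj_ne hw

end IsTrimming

end Trimming
section Limit

variable {X : ℕ → Type*} [∀ k, PseudoMetricSpace (X k)]

theorem pseudometric_of_tendsto_dist {α : Type*} {F : ∀ k, α → X k} {e : α → α → ℝ}
    (he : ∀ x y, Tendsto (fun k => dist (F k x) (F k y)) atTop (𝓝 (e x y))) :
    (∀ x, e x x = 0) ∧ (∀ x y, e x y = e y x) ∧ (∀ x y, 0 ≤ e x y) ∧
      (∀ x y z, e x z ≤ e x y + e y z) := by
  refine ⟨fun x => tendsto_nhds_unique (he x x) ?_, fun x y => tendsto_nhds_unique (he x y) ?_,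
    fun x y => ge_of_tendsto' (he x y) fun k => dist_nonneg,
    fun x y z => le_of_tendsto_of_tendsto' (he x z) ((he x y).add (he y z))
      fun k => dist_triangle _ _ _⟩
  · simp
  · exact (he y x).congr fun k => dist_comm _ _

variable {p : ∀ k, X k → X (k + 1)} {u : ∀ k, X k → ℝ} {x y : X 0} {r : ℝ}

theorem eq_zero_of_tendsto_dist_traj
    (he : Tendsto (fun k => dist (traj p x k) (traj p y k)) atTop (𝓝 r)) {n : ℕ}
    (hn : traj p x n = traj p y n) : r = 0 :=
  tendsto_nhds_unique he <| tendsto_const_nhds.congr' <|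
    eventually_atTop.2 ⟨n, fun m hm => by simp [traj_eq_of_le hm hn]⟩

namespace IsTrimming

theorem eq_of_tendsto_dist_traj (h : IsTrimming p u)
    (he : Tendsto (fun k => dist (traj p x k) (traj p y k)) atTop (𝓝 r))
    (hxy : ∀ k, traj p x k ≠ traj p y k) : r = dist x y - trimTsum p u x - trimTsum p u y := by
  have hyx : ∀ k, traj p y k ≠ traj p x k := fun k => (hxy k).symm
  refine tendsto_nhds_unique he (Tendsto.congr (fun n => (h.dist_traj_of_ne (hxy n)).symm) ?_)
  exact (tendsto_const_nhds.sub (tendsto_trimSum (h.summable_of_forall_traj_ne hxy))).sub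
    (tendsto_trimSum (h.summable_of_forall_traj_ne hyx))

theorem dist_le_of_tendsto_dist_traj (h : IsTrimming p u)
    (hx : Summable fun k => u k (traj p x k)) (hy : Summable fun k => u k (traj p y k))
    (he : Tendsto (fun k => dist (traj p x k) (traj p y k)) atTop (𝓝 r)) :
    dist x y ≤ r + trimTsum p u x + trimTsum p u y :=
  ge_of_tendsto' ((he.add (tendsto_trimSum hx)).add (tendsto_trimSum hy))
    (h.dist_le_dist_traj_add x y)

end IsTrimming

end Limit

section TightSpan

variable {α : Type*}

theorem TightSpan.le_add {d : α → α → ℝ} (hsymm : ∀ x y, d x y = d y x)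
    (htri : ∀ x y z, d x z ≤ d x y + d y z) {f : α → ℝ} (hf : f ∈ TightSpan d) (x y : α) :
    f y ≤ f x + d x y := by
  refine le_of_forall_pos_le_add fun ε hε => ?_
  obtain ⟨z, hz⟩ := hf.2.2 y ε hε
  linarith [hf.2.1 x z, htri y x z, hsymm y x]

theorem dT_add_right (f g h : α → ℝ) :
    dT (fun x => f x + h x) (fun x => g x + h x) = dT f g := by
  simp only [dT, add_sub_add_right_eq_sub]

end TightSpan

namespace IsTrimming

variable {X : ℕ → Type*} [∀ k, PseudoMetricSpace (X k)] {p : ∀ k, X k → X (k + 1)}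
  {u : ∀ k, X k → ℝ} {e : X 0 → X 0 → ℝ} {x₀ y₀ : X 0}

theorem add_trimTsum_mem_tightSpan (h : IsTrimming p u) (h₀ : ∀ k, traj p x₀ k ≠ traj p y₀ k)
    (he : ∀ x y, Tendsto (fun k => dist (traj p x k) (traj p y k)) atTop (𝓝 (e x y)))
    {f : X 0 → ℝ} (hf : f ∈ TightSpan e) :
    (fun x => f x + trimTsum p u x) ∈ TightSpan (fun x y : X 0 => dist x y) := by
  have hdist (x y : X 0) : dist x y ≤ e x y + trimTsum p u x + trimTsum p u y :=
    h.dist_le_of_tendsto_dist_traj (h.summable h₀ x) (h.summable h₀ y) (he x y)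
  have he_pm := pseudometric_of_tendsto_dist he
  refine ⟨fun x => add_nonneg (hf.1 x) (h.trimTsum_nonneg x),
    fun x y => by linarith [hf.2.1 x y, hdist x y], fun x ε hε => ?_⟩
  obtain ⟨y, hy⟩ := hf.2.2 x (ε / 2) (half_pos hε)
  by_cases hxy : ∀ k, traj p x k ≠ traj p y k
  · exact ⟨y, by linarith [h.eq_of_tendsto_dist_traj (he x y) hxy]⟩
  obtain ⟨n, hn⟩ := not_forall_not.mp hxy
  -- now `e x y = 0` forces `f x ≤ ε / 2`, and a point never meeting `x` is a good partner
  obtain ⟨w, hw⟩ := exists_forall_traj_ne h₀ x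
  have hfw := TightSpan.le_add he_pm.2.1 he_pm.2.2.2 hf x w
  exact ⟨w, by linarith [eq_zero_of_tendsto_dist_traj (he x y) hn, hf.1 y,
    h.eq_of_tendsto_dist_traj (he x w) hw]⟩

theorem sub_trimTsum_mem_tightSpan (h : IsTrimming p u) (h₀ : ∀ k, traj p x₀ k ≠ traj p y₀ k)
    (he : ∀ x y, Tendsto (fun k => dist (traj p x k) (traj p y k)) atTop (𝓝 (e x y)))
    {g : X 0 → ℝ} (hg : g ∈ TightSpan (fun x y : X 0 => dist x y))
    (hσg : ∀ x, trimTsum p u x ≤ g x) :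
    (fun x => g x - trimTsum p u x) ∈ TightSpan e := by
  refine ⟨fun x => sub_nonneg.2 (hσg x), fun x y => ?_, fun x ε hε => ?_⟩
  · by_cases hxy : ∀ k, traj p x k ≠ traj p y k
    · linarith [h.eq_of_tendsto_dist_traj (he x y) hxy, hg.2.1 x y]
    obtain ⟨n, hn⟩ := not_forall_not.mp hxy
    linarith [eq_zero_of_tendsto_dist_traj (he x y) hn, hσg x, hσg y]
  · obtain ⟨y, hy⟩ := hg.2.2 x ε hε
    have := h.dist_le_of_tendsto_dist_traj (h.summable h₀ x) (h.summable h₀ y) (he x y)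
    exact ⟨y, by linarith⟩

end IsTrimming

theorem stmt18_general {X : ℕ → Type*} [∀ k, MetricSpace (X k)]
    (p : ∀ k, X k → X (k + 1)) (u : ∀ k, X k → ℝ)
    (hu : ∀ k (x : X k), 0 ≤ u k x)
    (ha : ∀ k (x y : X k), p k x ≠ p k y →
      dist (p k x) (p k y) = dist x y - u k x - u k y)
    (hb : ∀ k (x y : X k), x ≠ y → p k x = p k y → dist x y = u k x + u k y)
    (hsep : ∃ x₀ y₀ : X 0, ∀ k, traj p x₀ k ≠ traj p y₀ k)
    (σ : X 0 → ℝ) (hσ : ∀ x, σ x = ∑' k, u k (traj p x k))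
    (e : X 0 → X 0 → ℝ)
    (he : ∀ x y : X 0, Filter.Tendsto (fun k => dist (traj p x k) (traj p y k))
      Filter.atTop (nhds (e x y))) :
    ((∀ x, e x x = 0) ∧ (∀ x y, e x y = e y x) ∧ (∀ x y, 0 ≤ e x y) ∧
      (∀ x y z, e x z ≤ e x y + e y z)) ∧
    (∀ f ∈ TightSpan e,
        (fun x => f x + σ x) ∈ TightSpan (fun x y : X 0 => dist x y) ∧
        ∀ (n : ℕ) (x : X 0),
          (∑ k ∈ Finset.range n, u k (traj p x k)) ≤ f x + σ x) ∧
    (∀ f₁ ∈ TightSpan e, ∀ f₂ ∈ TightSpan e,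
        (fun x => f₁ x + σ x) = (fun x => f₂ x + σ x) → f₁ = f₂) ∧
    (∀ g ∈ TightSpan (fun x y : X 0 => dist x y),
        (∀ (n : ℕ) (x : X 0), (∑ k ∈ Finset.range n, u k (traj p x k)) ≤ g x) →
        ∃ f ∈ TightSpan e, g = fun x => f x + σ x) ∧
    (∀ f₁ ∈ TightSpan e, ∀ f₂ ∈ TightSpan e,
        dT (fun x => f₁ x + σ x) (fun x => f₂ x + σ x) = dT f₁ f₂) := by
  obtain ⟨x₀, y₀, h₀⟩ := hsep
  have h : IsTrimming p u := ⟨hu, ha, hb⟩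
  obtain rfl : σ = trimTsum p u := funext hσ
  refine ⟨pseudometric_of_tendsto_dist he, fun f hf => ⟨h.add_trimTsum_mem_tightSpan h₀ he hf,
    fun n x => le_add_of_nonneg_of_le (hf.1 x) (h.trimSum_le_trimTsum (h.summable h₀ x) n)⟩,
    fun f₁ _ f₂ _ hΦ => funext fun x => add_right_cancel (congrFun hΦ x),
    fun g hg hgs => ?_, fun f₁ _ f₂ _ => dT_add_right f₁ f₂ _⟩
  have hσg (x : X 0) : trimTsum p u x ≤ g x :=
    le_of_tendsto' (tendsto_trimSum (h.summable h₀ x)) fun n => hgs n x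
  exact ⟨_, h.sub_trimTsum_mem_tightSpan h₀ he hg hσg, funext fun x => (sub_add_cancel _ _).symm⟩

theorem stmt18 {X : ℕ → Type*} [∀ k, MetricSpace (X k)]
    (p : ∀ k, X k → X (k + 1)) (u : ∀ k, X k → ℝ)
    (hsurj : ∀ k, Function.Surjective (p k))
    (hu : ∀ k (x : X k), 0 ≤ u k x)
    (ha : ∀ k (x y : X k), p k x ≠ p k y →
      dist (p k x) (p k y) = dist x y - u k x - u k y)
    (hb : ∀ k (x y : X k), x ≠ y → p k x = p k y → dist x y = u k x + u k y)
    (hsep : ∃ x₀ y₀ : X 0, ∀ k, traj p x₀ k ≠ traj p y₀ k)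
    (σ : X 0 → ℝ) (hσ : ∀ x, σ x = ∑' k, u k (traj p x k))
    (e : X 0 → X 0 → ℝ)
    (he : ∀ x y : X 0, Filter.Tendsto (fun k => dist (traj p x k) (traj p y k))
      Filter.atTop (nhds (e x y))) :
    ((∀ x, e x x = 0) ∧ (∀ x y, e x y = e y x) ∧ (∀ x y, 0 ≤ e x y) ∧
      (∀ x y z, e x z ≤ e x y + e y z)) ∧
    (∀ f ∈ TightSpan e,
        (fun x => f x + σ x) ∈ TightSpan (fun x y : X 0 => dist x y) ∧
        ∀ (n : ℕ) (x : X 0),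
          (∑ k ∈ Finset.range n, u k (traj p x k)) ≤ f x + σ x) ∧
    (∀ f₁ ∈ TightSpan e, ∀ f₂ ∈ TightSpan e,
        (fun x => f₁ x + σ x) = (fun x => f₂ x + σ x) → f₁ = f₂) ∧
    (∀ g ∈ TightSpan (fun x y : X 0 => dist x y),
        (∀ (n : ℕ) (x : X 0), (∑ k ∈ Finset.range n, u k (traj p x k)) ≤ g x) →
        ∃ f ∈ TightSpan e, g = fun x => f x + σ x) ∧
    (∀ f₁ ∈ TightSpan e, ∀ f₂ ∈ TightSpan e,
        dT (fun x => f₁ x + σ x) (fun x => f₂ x + σ x) = dT f₁ f₂) :=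
  stmt18_general p u hu ha hb hsep σ hσ e he
end
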